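/- Let Ã denote the canonical image of A in A ⋊_α^σ G (via a ↦ a e̅). Then the commutant Comm(Ã) = {b ∈ A ⋊_α^σ G : ab = ba for all a ∈ Ã} equals { ∑_s r_s s̅ : r_s σ_s(a) = a r_s for all a ∈ A, s ∈ G }. -/

import Mathlib

/-- A `G`-crossed system `{A, G, σ, α}`: a unital ring `A`, a group `G`,
`σ : G → Aut(A)` and a `σ`-cocycle `α : G × G → U(A)` satisfying the
crossed-system axioms (i)-(iii). -/
structure CrossedSystem (A : Type*) [Ring A] (G : Type*) [Group G] where
  σ : G → RingAut A
  α : G → G → Aˣ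
  compat : ∀ x y : G, ∀ a : A,
    σ x (σ y a) = (α x y : A) * σ (x * y) a * ((α x y)⁻¹ : Aˣ)
  cocycle : ∀ x y z : G,
    (α x y : A) * (α (x * y) z : A) = σ x (α y z : A) * (α x (y * z) : A)
  unit_right : ∀ x : G, α x 1 = 1
  unit_left : ∀ x : G, α 1 x = 1

variable {A : Type*} [Ring A] {G : Type*} [Group G]

/-- Multiplication of the crossed product `A ⋊_α^σ G`, realized on the free
left `A`-module `G →₀ A`: `(a x̄)(b ȳ) = a σ_x(b) α(x,y) (x*y)‾`. -/
noncomputable def cmul (C : CrossedSystem A G) (f g : G →₀ A) : G →₀ A :=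
  f.sum fun s a => g.sum fun t b =>
    Finsupp.single (s * t) (a * C.σ s b * (C.α s t : A))

/-- The element `1_A ē` of the crossed product. -/
noncomputable def cone : G →₀ A := Finsupp.single 1 1

/-- The canonical embedding `ι : A → A ⋊_α^σ G`, `a ↦ a ē`; its range is `Ã`. -/
noncomputable def cemb (a : A) : G →₀ A := Finsupp.single 1 a

/-- The commutant `Comm(Ã)` of the embedded base ring in the crossed product. -/
noncomputable def cCommutant (C : CrossedSystem A G) : Set (G →₀ A) :=
  {x | ∀ a : A, cmul C (cemb a) x = cmul C x (cemb a)}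

/-- `I` is a (non-unital) two-sided ideal of the crossed product `A ⋊_α^σ G`. -/
def cIsIdeal (C : CrossedSystem A G) (I : Set (G →₀ A)) : Prop :=
  0 ∈ I ∧ (∀ x ∈ I, ∀ y ∈ I, x + y ∈ I) ∧ (∀ x ∈ I, -x ∈ I) ∧
    (∀ x ∈ I, ∀ y : G →₀ A, cmul C y x ∈ I ∧ cmul C x y ∈ I)

/-- With `α 1 1 = 1`, `compat 1 1` says `σ 1 ∘ σ 1 = σ 1`, and `σ 1` is injective. -/
theorem CrossedSystem.σ_one_apply (C : CrossedSystem A G) (a : A) : C.σ 1 a = a := by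
  simpa [C.unit_right] using C.compat 1 1 a

theorem cemb_cmul_apply (C : CrossedSystem A G) (a : A) (x : G →₀ A) (s : G) :
    cmul C (cemb a) x s = a * x s := by
  rw [cmul, cemb, Finsupp.sum_single_index (by simp [Finsupp.sum]), Finsupp.sum_apply,
    Finsupp.sum_eq_single s (fun t _ ht => by simp [Finsupp.single_eq_of_ne' ht]) (by simp)]
  simp [C.σ_one_apply, C.unit_left]

theorem cmul_cemb_apply (C : CrossedSystem A G) (a : A) (x : G →₀ A) (s : G) :
    cmul C x (cemb a) s = x s * C.σ s a := by
  rw [cmul, Finsupp.sum_apply, Finsupp.sum_eq_single s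
    (fun t _ ht => by simp [cemb, Finsupp.single_eq_of_ne' ht]) (by simp [cemb])]
  simp [cemb, C.unit_right]

theorem stmt_9 (C : CrossedSystem A G) (x : G →₀ A) :
    x ∈ cCommutant C ↔ ∀ s : G, ∀ a : A, x s * C.σ s a = a * x s := by
  simp only [cCommutant, Set.mem_ofPred_eq, Finsupp.ext_iff, cemb_cmul_apply, cmul_cemb_apply]
  exact ⟨fun h s a => (h a s).symm, fun h a s => (h s a).symm⟩
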